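/- arXiv:2303.04894 — 6 statements merged into one kernel-verified Lean document; each statement's English description precedes it below -/
import Mathlib

section
/- Let p : Fin M → A × T be a greedy sequence and let φ : T → A be any feasible assignment. Then there exists a map F : T → T such that (i) for every target t, w (φ t, t) ≤ w (p h) where h is the unique index with (p h).2 = F t, and (ii) for every target y, the set {t | F t = y} has at most 2 elements. -/
/-- Charging-map existence in the proof of Theorem 1: given a greedy sequence `p`
and a feasible assignment `φ`, there is a map `F : T → T` such that the quality of
the optimal pair for `t` is at most the greedy quality of the step whose target is
`F t`, and every fiber of `F` has at most 2 elements. -/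
theorem greedy_charging_map_exists
    {A R T : Type*} [Fintype A] [Fintype R] [Fintype T]
    (M : ℕ) (hM : Fintype.card T = M)
    (r : A → R) (w : A × T → ℝ)
    (hw : ∀ x, 0 ≤ w x)
    (p : Fin M → A × T)
    (htar : Function.Bijective (fun h => (p h).2))
    (hrob : Function.Injective (fun h => r (p h).1))
    (hgreedy : ∀ h : Fin M, ∀ a : A, ∀ t : T,
      (∀ g, g < h → r a ≠ r (p g).1) →
      (∀ g, g < h → t ≠ (p g).2) →
      w (a, t) ≤ w (p h))
    (φ : T → A) (hφ : Function.Injective (r ∘ φ)) :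
    ∃ F : T → T,
      (∀ t : T, ∀ h : Fin M, (p h).2 = F t → w (φ t, t) ≤ w (p h)) ∧
      (∀ y : T, ({t | F t = y} : Set T).ncard ≤ 2) := by
  classical
  set e := Equiv.ofBijective _ htar with he
  have hpe : ∀ i : Fin M, (p i).2 = e i := fun i => rfl
  -- index of target t
  set idx : T → Fin M := fun t => e.symm t with hidx
  have hpidx : ∀ t, (p (idx t)).2 = t := fun t => e.apply_symm_apply t
  -- charge index
  set ch : T → Fin M := fun t =>
    if h : ∃ g, g < idx t ∧ r (p g).1 = r (φ t) then h.choose else idx t with hch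
  have hkey : ∀ t, w (φ t, t) ≤ w (p (ch t)) := by
    intro t
    by_cases h : ∃ g, g < idx t ∧ r (p g).1 = r (φ t)
    · have hc : ch t = h.choose := by simp [hch, h]
      obtain ⟨hlt, hr⟩ := h.choose_spec
      rw [hc]
      apply hgreedy _ _ _
      · intro g hg hrg
        exact absurd (hrob (hr.trans hrg)) hg.ne'
      · intro g hg ht
        have : g = idx t := e.injective (by rw [← hpe, ← ht]; exact (e.apply_symm_apply t).symm)
        exact absurd this (ne_of_lt (hg.trans hlt))
    · have hc : ch t = idx t := by simp [hch, h]
      rw [hc]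
      apply hgreedy _ _ _
      · intro g hg hrg
        exact h ⟨g, hg, hrg.symm⟩
      · intro g hg ht
        have : g = idx t := e.injective (by rw [← hpe, ← ht]; exact (e.apply_symm_apply t).symm)
        exact absurd this (ne_of_lt hg)
  refine ⟨fun t => (p (ch t)).2, ?_, ?_⟩
  · intro t h hh
    have : h = ch t := e.injective (by rw [← hpe, ← hpe, hh])
    rw [this]; exact hkey t
  · intro y
    have hsub : ({t | (p (ch t)).2 = y} : Set T) ⊆
        {(p (idx y)).2} ∪ {t | r (φ t) = r (p (idx y)).1} := by
      intro t ht
      have hcht : ch t = idx y := e.injective (by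
        simpa [hpe] using ht.trans (hpidx y).symm)
      by_cases h : ∃ g, g < idx t ∧ r (p g).1 = r (φ t)
      · right
        have hc : ch t = h.choose := by simp [hch, h]
        have := h.choose_spec.2
        rw [hc] at hcht
        simp only [Set.mem_setOf_eq]
        rw [← hcht]; exact this.symm
      · left
        have hc : ch t = idx t := by simp [hch, h]
        rw [hc] at hcht
        simp [← hcht, hpidx]
    calc ({t | (p (ch t)).2 = y} : Set T).ncard
        ≤ ({(p (idx y)).2} ∪ {t | r (φ t) = r (p (idx y)).1} : Set T).ncard :=
          Set.ncard_le_ncard hsub (Set.toFinite _)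
      _ ≤ ({(p (idx y)).2} : Set T).ncard + ({t | r (φ t) = r (p (idx y)).1} : Set T).ncard :=
          Set.ncard_union_le _ _
      _ ≤ 1 + 1 := by
          gcongr
          · simp
          · rw [Set.ncard_le_one_iff (Set.toFinite _)]
            intro a b ha hb
            exact hφ (ha.trans hb.symm)
end

section
/- Let p : Fin M → A × T be a greedy sequence. Then for every feasible assignment φ : T → A, the total greedy tracking quality satisfies ∑ h, w (p h) ≥ (1/2) * ∑ t, w (φ t, t). In particular, the greedy sequence achieves at least half of the optimal total tracking quality over all feasible assignments. -/
/-- Theorem 1: the greedy robot-action assignment (Algorithm 1) achieves at least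
half of the total tracking quality of any feasible assignment. -/
theorem greedy_half_approximation
    {A R T : Type*} [Fintype A] [Fintype R] [Fintype T]
    (M : ℕ) (hM : Fintype.card T = M)
    (r : A → R) (w : A × T → ℝ)
    (hw : ∀ x, 0 ≤ w x)
    (p : Fin M → A × T)
    (htar : Function.Bijective (fun h => (p h).2))
    (hrob : Function.Injective (fun h => r (p h).1))
    (hgreedy : ∀ h : Fin M, ∀ a : A, ∀ t : T,
      (∀ g, g < h → r a ≠ r (p g).1) →
      (∀ g, g < h → t ≠ (p g).2) →
      w (a, t) ≤ w (p h))
    (φ : T → A) (hφ : Function.Injective (r ∘ φ)) :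
    ∑ h, w (p h) ≥ (1 / 2) * ∑ t, w (φ t, t) := by
  classical
  -- the set of indices "blocking" target t
  set S : T → Finset (Fin M) :=
    fun t => Finset.univ.filter (fun h => (p h).2 = t ∨ r (p h).1 = r (φ t)) with hS
  have hSne : ∀ t, (S t).Nonempty := by
    intro t
    obtain ⟨h0, hh0⟩ := htar.2 t
    exact ⟨h0, by simp [hS, hh0]⟩
  set k : T → Fin M := fun t => (S t).min' (hSne t) with hk
  have hkmem : ∀ t, (p (k t)).2 = t ∨ r (p (k t)).1 = r (φ t) := by
    intro t
    have := (S t).min'_mem (hSne t)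
    simpa [hS] using this
  have hkmin : ∀ t, ∀ g, g < k t → (p g).2 ≠ t ∧ r (p g).1 ≠ r (φ t) := by
    intro t g hg
    by_contra hcon
    have hmem : g ∈ S t := by
      simp only [hS, Finset.mem_filter, Finset.mem_univ, true_and]
      tauto
    exact absurd ((S t).min'_le g hmem) (not_le.mpr hg)
  -- each target's opt value is dominated by the greedy value at index k t
  have hdom : ∀ t, w (φ t, t) ≤ w (p (k t)) := by
    intro t
    refine hgreedy (k t) (φ t) t ?_ ?_
    · intro g hg; exact fun h => (hkmin t g hg).2 h.symm
    · intro g hg; exact fun h => (hkmin t g hg).1 h.symm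
  -- each index h has at most 2 targets with k t = h
  have hcard : ∀ h : Fin M,
      (Finset.univ.filter (fun t => k t = h)).card ≤ 2 := by
    intro h
    have hsub : Finset.univ.filter (fun t => k t = h) ⊆
        {(p h).2} ∪ Finset.univ.filter (fun t => r (φ t) = r (p h).1) := by
      intro t ht
      simp only [Finset.mem_filter, Finset.mem_univ, true_and] at ht
      rcases hkmem t with h1 | h1
      · rw [ht] at h1
        simp [h1.symm]
      · rw [ht] at h1
        simp [h1.symm]
    calc (Finset.univ.filter (fun t => k t = h)).card
        ≤ ({(p h).2} ∪ Finset.univ.filter (fun t => r (φ t) = r (p h).1)).card :=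
          Finset.card_le_card hsub
      _ ≤ 1 + (Finset.univ.filter (fun t => r (φ t) = r (p h).1)).card := by
          simpa using Finset.card_union_le {(p h).2}
            (Finset.univ.filter (fun t => r (φ t) = r (p h).1))
      _ ≤ 1 + 1 := by
          gcongr
          apply Finset.card_le_one.mpr
          intro a ha b hb
          simp only [Finset.mem_filter, Finset.mem_univ, true_and] at ha hb
          exact hφ (show (r ∘ φ) a = (r ∘ φ) b from ha.trans hb.symm)
  have key : ∑ t, w (φ t, t) ≤ 2 * ∑ h, w (p h) := by
    calc ∑ t, w (φ t, t) ≤ ∑ t, w (p (k t)) := Finset.sum_le_sum fun t _ => hdom t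
      _ = ∑ h, ∑ t ∈ Finset.univ.filter (fun t => k t = h), w (p (k t)) :=
          (Finset.sum_fiberwise Finset.univ k (fun t => w (p (k t)))).symm
      _ = ∑ h, ∑ t ∈ Finset.univ.filter (fun t => k t = h), w (p h) := by
          refine Finset.sum_congr rfl fun h _ => Finset.sum_congr rfl fun t ht => ?_
          simp only [Finset.mem_filter] at ht
          rw [ht.2]
      _ = ∑ h, ((Finset.univ.filter (fun t => k t = h)).card : ℝ) * w (p h) := by
          simp [Finset.sum_const, nsmul_eq_mul]
      _ ≤ ∑ h, 2 * w (p h) := by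
          refine Finset.sum_le_sum fun h _ => ?_
          have := hcard h
          have h2 : ((Finset.univ.filter (fun t => k t = h)).card : ℝ) ≤ 2 := by
            exact_mod_cast this
          exact mul_le_mul_of_nonneg_right h2 (hw _)
      _ = 2 * ∑ h, w (p h) := by rw [Finset.mul_sum]
  linarith
end

section
/- Let p : Fin M → (A × A) × T be a greedy pair sequence and let φ : T → A × A be any feasible pair assignment. Then there exists a map F : T → T such that (i) for every target t, w ((φ t).1, (φ t).2, t) ≤ w_greedy (F t), where w_greedy (t') denotes w applied to the action pair and target of the unique greedy step whose target is t', and (ii) for every target y, the set {t | F t = y} has at most 3 elements. -/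
/-- Charging-map existence in the proof of Theorem 2: given a greedy pair sequence
`p` and a feasible pair assignment `φ`, there is a map `F : T → T` such that the
quality of the optimal triple for `t` is at most the greedy quality of the step
whose target is `F t`, and every fiber of `F` has at most 3 elements. -/
theorem greedy_pair_charging_map_exists
    {A R T : Type*} [Fintype A] [Fintype R] [Fintype T]
    (M : ℕ) (hM : Fintype.card T = M)
    (r : A → R) (w : A → A → T → ℝ)
    (hw : ∀ a a' t, 0 ≤ w a a' t)
    (hsym : ∀ a a' t, w a a' t = w a' a t)
    (p : Fin M → (A × A) × T)
    (htar : Function.Bijective (fun h => (p h).2))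
    (hrob : Function.Injective
      (fun x : Fin M × Bool => r (if x.2 then (p x.1).1.1 else (p x.1).1.2)))
    (hgreedy : ∀ h : Fin M, ∀ a a' : A, ∀ t : T,
      r a ≠ r a' →
      (∀ g, g < h →
        r a ≠ r (p g).1.1 ∧ r a ≠ r (p g).1.2 ∧
        r a' ≠ r (p g).1.1 ∧ r a' ≠ r (p g).1.2) →
      (∀ g, g < h → t ≠ (p g).2) →
      w a a' t ≤ w (p h).1.1 (p h).1.2 (p h).2)
    (φ : T → A × A)
    (hφ : Function.Injective
      (fun x : T × Bool => r (if x.2 then (φ x.1).1 else (φ x.1).2))) :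
    ∃ F : T → T,
      (∀ t : T, ∀ h : Fin M, (p h).2 = F t →
        w (φ t).1 (φ t).2 t ≤ w (p h).1.1 (p h).1.2 (p h).2) ∧
      (∀ y : T, ({t | F t = y} : Set T).ncard ≤ 3) := by
  classical
  -- conflict of step h with the optimal triple for t
  set C : Fin M → T → Prop := fun h t =>
    (p h).2 = t ∨ r (φ t).1 = r (p h).1.1 ∨ r (φ t).1 = r (p h).1.2 ∨
      r (φ t).2 = r (p h).1.1 ∨ r (φ t).2 = r (p h).1.2 with hC
  have hne : ∀ t, (Finset.univ.filter (fun h => C h t)).Nonempty := by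
    intro t
    obtain ⟨h, hh⟩ := htar.2 t
    exact ⟨h, by simp [hC, hh]⟩
  set hm : T → Fin M := fun t => (Finset.univ.filter (fun h => C h t)).min' (hne t)
    with hhm
  have hmem : ∀ t, C (hm t) t := by
    intro t
    have := Finset.min'_mem (Finset.univ.filter (fun h => C h t)) (hne t)
    simpa using this
  have hmin : ∀ t g, g < hm t → ¬ C g t := by
    intro t g hg hCg
    have : hm t ≤ g := Finset.min'_le _ _ (by simpa using hCg)
    exact absurd hg (not_lt.mpr this)
  -- helper for φ-robot injectivity
  have hφ' : ∀ (t t' : T) (b b' : Bool),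
      r (if b then (φ t).1 else (φ t).2) = r (if b' then (φ t').1 else (φ t').2) →
      t = t' := by
    intro t t' b b' h
    have := hφ (a₁ := (t, b)) (a₂ := (t', b')) h
    exact congrArg Prod.fst this
  refine ⟨fun t => (p (hm t)).2, ?_, ?_⟩
  · intro t h hFt
    have hh : h = hm t := htar.1 hFt
    subst hh
    apply hgreedy (hm t) (φ t).1 (φ t).2 t
    · intro heq
      have := hφ (a₁ := (t, true)) (a₂ := (t, false)) (by simpa using heq)
      simpa using congrArg Prod.snd this
    · intro g hg
      have := hmin t g hg
      simp only [hC] at this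
      push_neg at this
      exact ⟨this.2.1, this.2.2.1, this.2.2.2.1, this.2.2.2.2⟩
    · intro g hg heq
      exact hmin t g hg (Or.inl heq.symm)
  · intro y
    obtain ⟨h₀, hh₀⟩ := htar.2 y
    have hsub : {t | (p (hm t)).2 = y} ⊆
        ({y} : Set T) ∪
        {t : T | r (φ t).1 = r (p h₀).1.1 ∨ r (φ t).2 = r (p h₀).1.1} ∪
        {t : T | r (φ t).1 = r (p h₀).1.2 ∨ r (φ t).2 = r (p h₀).1.2} := by
      intro t ht
      have hmt : hm t = h₀ := htar.1 (show (p (hm t)).2 = (p h₀).2 by rw [ht]; exact hh₀.symm)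
      have hc := hmem t
      rw [hmt] at hc
      rcases hc with h1 | h2 | h3 | h4 | h5
      · left; left; simp [← h1, hh₀]
      · left; right; exact Or.inl h2
      · right; exact Or.inl h3
      · left; right; exact Or.inr h4
      · right; exact Or.inr h5
    have hs2 : ({t : T | r (φ t).1 = r (p h₀).1.1 ∨ r (φ t).2 = r (p h₀).1.1} : Set T).ncard ≤ 1 := by
      rw [Set.ncard_le_one_iff]
      intro t t' ht ht'
      rcases ht with h | h <;> rcases ht' with h' | h'
      · exact hφ' t t' true true (by simpa using h.trans h'.symm)
      · exact hφ' t t' true false (by simpa using h.trans h'.symm)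
      · exact hφ' t t' false true (by simpa using h.trans h'.symm)
      · exact hφ' t t' false false (by simpa using h.trans h'.symm)
    have hs3 : ({t : T | r (φ t).1 = r (p h₀).1.2 ∨ r (φ t).2 = r (p h₀).1.2} : Set T).ncard ≤ 1 := by
      rw [Set.ncard_le_one_iff]
      intro t t' ht ht'
      rcases ht with h | h <;> rcases ht' with h' | h'
      · exact hφ' t t' true true (by simpa using h.trans h'.symm)
      · exact hφ' t t' true false (by simpa using h.trans h'.symm)
      · exact hφ' t t' false true (by simpa using h.trans h'.symm)
      · exact hφ' t t' false false (by simpa using h.trans h'.symm)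
    calc ({t | (p (hm t)).2 = y} : Set T).ncard
        ≤ (({y} : Set T) ∪
            {t : T | r (φ t).1 = r (p h₀).1.1 ∨ r (φ t).2 = r (p h₀).1.1} ∪
            {t : T | r (φ t).1 = r (p h₀).1.2 ∨ r (φ t).2 = r (p h₀).1.2}).ncard :=
          Set.ncard_le_ncard hsub (Set.toFinite _)
      _ ≤ (({y} : Set T) ∪
            {t : T | r (φ t).1 = r (p h₀).1.1 ∨ r (φ t).2 = r (p h₀).1.1}).ncard +
          ({t : T | r (φ t).1 = r (p h₀).1.2 ∨ r (φ t).2 = r (p h₀).1.2}).ncard :=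
          Set.ncard_union_le _ _
      _ ≤ (({y} : Set T).ncard +
            ({t : T | r (φ t).1 = r (p h₀).1.1 ∨ r (φ t).2 = r (p h₀).1.1}).ncard) +
          ({t : T | r (φ t).1 = r (p h₀).1.2 ∨ r (φ t).2 = r (p h₀).1.2}).ncard := by
          exact Nat.add_le_add_right (Set.ncard_union_le _ _) _
      _ ≤ 1 + 1 + 1 := by
          have : ({y} : Set T).ncard = 1 := Set.ncard_singleton y
          omega
      _ = 3 := rfl
end

section
/- Let p : Fin M → (A × A) × T be a greedy pair sequence. Then for every feasible pair assignment φ : T → A × A, the total greedy tracking quality satisfies ∑ h, w ((p h).1.1) ((p h).1.2) ((p h).2) ≥ (1/3) * ∑ t, w ((φ t).1) ((φ t).2) t. In particular, the greedy pair sequence achieves at least one third of the optimal total tracking quality over all feasible pair assignments. -/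
/-- Theorem 2: the greedy robot-action-pair assignment (Algorithm 2) achieves at
least one third of the total tracking quality of any feasible pair assignment. -/
theorem greedy_third_approximation
    {A R T : Type*} [Fintype A] [Fintype R] [Fintype T]
    (M : ℕ) (hM : Fintype.card T = M)
    (r : A → R) (w : A → A → T → ℝ)
    (hw : ∀ a a' t, 0 ≤ w a a' t)
    (hsym : ∀ a a' t, w a a' t = w a' a t)
    (p : Fin M → (A × A) × T)
    (htar : Function.Bijective (fun h => (p h).2))
    (hrob : Function.Injective
      (fun x : Fin M × Bool => r (if x.2 then (p x.1).1.1 else (p x.1).1.2)))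
    (hgreedy : ∀ h : Fin M, ∀ a a' : A, ∀ t : T,
      r a ≠ r a' →
      (∀ g, g < h →
        r a ≠ r (p g).1.1 ∧ r a ≠ r (p g).1.2 ∧
        r a' ≠ r (p g).1.1 ∧ r a' ≠ r (p g).1.2) →
      (∀ g, g < h → t ≠ (p g).2) →
      w a a' t ≤ w (p h).1.1 (p h).1.2 (p h).2)
    (φ : T → A × A)
    (hφ : Function.Injective
      (fun x : T × Bool => r (if x.2 then (φ x.1).1 else (φ x.1).2))) :
    ∑ h, w (p h).1.1 (p h).1.2 (p h).2 ≥
      (1 / 3) * ∑ t, w (φ t).1 (φ t).2 t := by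
  classical
  set G : Fin M → ℝ := fun h => w (p h).1.1 (p h).1.2 (p h).2 with hGdef
  -- distinctness of optimal robots forces target equality
  have hφ' : ∀ t t' : T, (r (φ t).1 = r (φ t').1 ∨ r (φ t).1 = r (φ t').2 ∨
      r (φ t).2 = r (φ t').1 ∨ r (φ t).2 = r (φ t').2) → t = t' := by
    intro t t' hcase
    rcases hcase with h1 | h1 | h1 | h1
    · have := hφ (a₁ := (t, true)) (a₂ := (t', true)) (by simpa using h1)
      exact congrArg Prod.fst this
    · have := hφ (a₁ := (t, true)) (a₂ := (t', false)) (by simpa using h1)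
      exact congrArg Prod.fst this
    · have := hφ (a₁ := (t, false)) (a₂ := (t', true)) (by simpa using h1)
      exact congrArg Prod.fst this
    · have := hφ (a₁ := (t, false)) (a₂ := (t', false)) (by simpa using h1)
      exact congrArg Prod.fst this
  -- conflict predicate
  set C : T → Fin M → Prop := fun t h =>
    (p h).2 = t ∨ r (p h).1.1 = r (φ t).1 ∨ r (p h).1.1 = r (φ t).2 ∨
      r (p h).1.2 = r (φ t).1 ∨ r (p h).1.2 = r (φ t).2 with hCdef
  have hSne : ∀ t : T, (Finset.univ.filter (fun h => C t h)).Nonempty := by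
    intro t
    obtain ⟨h, hh⟩ := htar.2 t
    exact ⟨h, by simp [hCdef, hh]⟩
  set f : T → Fin M := fun t => (Finset.univ.filter (fun h => C t h)).min' (hSne t)
    with hfdef
  have hmem : ∀ t, C t (f t) := by
    intro t
    have := (Finset.univ.filter (fun h => C t h)).min'_mem (hSne t)
    exact (Finset.mem_filter.mp this).2
  have hmin : ∀ t g, g < f t → ¬ C t g := by
    intro t g hg hc
    have : f t ≤ g := Finset.min'_le _ _ (by simp [hc])
    exact absurd hg (not_lt.mpr this)
  -- greedy dominates optimal on the charged step
  have hkey : ∀ t, w (φ t).1 (φ t).2 t ≤ G (f t) := by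
    intro t
    apply hgreedy (f t) (φ t).1 (φ t).2 t
    · intro hr
      have := hφ (a₁ := (t, true)) (a₂ := (t, false)) (by simpa using hr)
      simp at this
    · intro g hg
      have hnc := hmin t g hg
      simp only [hCdef, not_or] at hnc
      exact ⟨fun h => hnc.2.1 h.symm, fun h => hnc.2.2.2.1 h.symm,
        fun h => hnc.2.2.1 h.symm, fun h => hnc.2.2.2.2 h.symm⟩
    · intro g hg
      have hnc := hmin t g hg
      simp only [hCdef, not_or] at hnc
      exact fun h => hnc.1 h.symm
  -- each greedy step is charged at most 3 times
  have hcard : ∀ h : Fin M, (Finset.univ.filter (fun t => f t = h)).card ≤ 3 := by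
    intro h
    have : (Finset.univ.filter (fun t => f t = h)).card ≤
        (Finset.univ : Finset (Fin 3)).card := by
      apply Finset.card_le_card_of_injOn
        (fun t => if t = (p h).2 then (0 : Fin 3) else
          if r (p h).1.1 = r (φ t).1 ∨ r (p h).1.1 = r (φ t).2 then 1 else 2)
        (fun _ _ => Finset.mem_univ _)
      intro t ht t' ht' heq
      have hc : C t h := by
        have := hmem t
        rwa [(Finset.mem_filter.mp ht).2] at this
      have hc' : C t' h := by
        have := hmem t'
        rwa [(Finset.mem_filter.mp ht').2] at this
      simp only at heq
      by_cases h1 : t = (p h).2 <;> by_cases h1' : t' = (p h).2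
      · exact h1.trans h1'.symm
      · exfalso; simp only [h1, h1', if_true, if_false] at heq
        split_ifs at heq <;> exact absurd heq (by decide)
      · exfalso; simp only [h1, h1', if_true, if_false] at heq
        split_ifs at heq <;> exact absurd heq (by decide)
      by_cases h2 : r (p h).1.1 = r (φ t).1 ∨ r (p h).1.1 = r (φ t).2 <;>
        by_cases h2' : r (p h).1.1 = r (φ t').1 ∨ r (p h).1.1 = r (φ t').2 <;>
        simp only [h1, h1', h2, h2', if_true, if_false] at heq
      · rcases h2 with h2 | h2 <;> rcases h2' with h5 | h5
        · exact hφ' t t' (Or.inl (h2.symm.trans h5))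
        · exact hφ' t t' (Or.inr (Or.inl (h2.symm.trans h5)))
        · exact hφ' t t' (Or.inr (Or.inr (Or.inl (h2.symm.trans h5))))
        · exact hφ' t t' (Or.inr (Or.inr (Or.inr (h2.symm.trans h5))))
      · exact absurd heq (by decide)
      · exact absurd heq (by decide)
      · -- both in the "else" branch: second robot of step h matches
        have hm : r (p h).1.2 = r (φ t).1 ∨ r (p h).1.2 = r (φ t).2 := by
          rcases hc with hc | hc | hc | hc | hc
          · exact absurd hc.symm h1
          · exact (h2 (Or.inl hc)).elim
          · exact (h2 (Or.inr hc)).elim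
          · exact Or.inl hc
          · exact Or.inr hc
        have hm' : r (p h).1.2 = r (φ t').1 ∨ r (p h).1.2 = r (φ t').2 := by
          rcases hc' with hc' | hc' | hc' | hc' | hc'
          · exact absurd hc'.symm h1'
          · exact (h2' (Or.inl hc')).elim
          · exact (h2' (Or.inr hc')).elim
          · exact Or.inl hc'
          · exact Or.inr hc'
        rcases hm with hm | hm <;> rcases hm' with hm' | hm'
        · exact hφ' t t' (Or.inl (hm.symm.trans hm'))
        · exact hφ' t t' (Or.inr (Or.inl (hm.symm.trans hm')))
        · exact hφ' t t' (Or.inr (Or.inr (Or.inl (hm.symm.trans hm'))))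
        · exact hφ' t t' (Or.inr (Or.inr (Or.inr (hm.symm.trans hm'))))
    simpa using this
  -- sum manipulation
  have hfib : ∑ t, G (f t) =
      ∑ h : Fin M, (Finset.univ.filter (fun t => f t = h)).card • G h := by
    rw [← Finset.sum_fiberwise Finset.univ f (fun t => G (f t))]
    refine Finset.sum_congr rfl fun h _ => ?_
    rw [Finset.sum_congr rfl (fun t ht => by
      rw [(Finset.mem_filter.mp ht).2]), Finset.sum_const]
  have hmain : ∑ t, w (φ t).1 (φ t).2 t ≤ 3 * ∑ h, G h := by
    calc ∑ t, w (φ t).1 (φ t).2 t ≤ ∑ t, G (f t) :=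
          Finset.sum_le_sum fun t _ => hkey t
      _ = ∑ h : Fin M, (Finset.univ.filter (fun t => f t = h)).card • G h := hfib
      _ ≤ ∑ h : Fin M, 3 * G h := by
          refine Finset.sum_le_sum fun h _ => ?_
          rw [nsmul_eq_mul]
          exact mul_le_mul_of_nonneg_right (by exact_mod_cast hcard h)
            (hw _ _ _)
      _ = 3 * ∑ h, G h := (Finset.mul_sum _ _ _).symm
  have hGsum : ∑ h, w (p h).1.1 (p h).1.2 (p h).2 = ∑ h, G h := rfl
  rw [ge_iff_le, hGsum]
  linarith
end

section
/- Fix n ≥ 1. Let p : Fin M → (Fin n → A) × T be a greedy n-tuple sequence. Then for every feasible n-tuple assignment φ : T → (Fin n → A), the total greedy tracking quality satisfies ∑ h, w ((p h).1) ((p h).2) ≥ (1/(n+1)) * ∑ t, w (φ t) t. In particular, the greedy n-tuple sequence achieves at least a 1/(n+1) fraction of the optimal total tracking quality over all feasible n-tuple assignments. -/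
/-- Remark 1: when `n` robots are required per target, the greedy robot-action
`n`-tuple assignment achieves at least a `1/(n+1)` fraction of the total tracking
quality of any feasible `n`-tuple assignment. -/
theorem greedy_tuple_approximation
    {A R T : Type*} [Fintype A] [Fintype R] [Fintype T]
    (n : ℕ) (hn : 1 ≤ n)
    (M : ℕ) (hM : Fintype.card T = M)
    (r : A → R) (w : (Fin n → A) → T → ℝ)
    (hw : ∀ a t, 0 ≤ w a t)
    (hsym : ∀ (σ : Equiv.Perm (Fin n)) (a : Fin n → A) (t : T),
      w (a ∘ σ) t = w a t)
    (p : Fin M → (Fin n → A) × T)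
    (htar : Function.Bijective (fun h => (p h).2))
    (hrob : Function.Injective (fun x : Fin M × Fin n => r ((p x.1).1 x.2)))
    (hgreedy : ∀ h : Fin M, ∀ a : Fin n → A, ∀ t : T,
      Function.Injective (fun i => r (a i)) →
      (∀ i : Fin n, ∀ g, g < h → ∀ i' : Fin n, r (a i) ≠ r ((p g).1 i')) →
      (∀ g, g < h → t ≠ (p g).2) →
      w a t ≤ w (p h).1 (p h).2)
    (φ : T → Fin n → A)
    (hφ : Function.Injective (fun x : T × Fin n => r (φ x.1 x.2))) :
    ∑ h, w (p h).1 (p h).2 ≥ (1 / (n + 1) : ℝ) * ∑ t, w (φ t) t := by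
  classical
  set e : Fin M ≃ T := Equiv.ofBijective _ htar with he
  have hpe : ∀ g : Fin M, (p g).2 = e g := fun g => rfl
  have hpe' : ∀ t : T, (p (e.symm t)).2 = t := fun t => e.apply_symm_apply t
  have hφinj : ∀ t, Function.Injective (fun i => r (φ t i)) := by
    intro t i i' hii
    have := hφ (a₁ := (t, i)) (a₂ := (t, i')) hii
    exact (Prod.mk.injEq _ _ _ _ ▸ this).2
  -- the set of steps before t's own step at which (φ t, t) is blocked by a robot conflict
  set S : T → Finset (Fin M) := fun t =>
    Finset.univ.filter (fun g => g < e.symm t ∧ ∃ i j, r (φ t i) = r ((p g).1 j)) with hS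
  -- charge function
  set c : T → Fin M := fun t =>
    if hSt : (S t).Nonempty then (S t).min' hSt else e.symm t with hc
  have hSmem : ∀ (t : T) (g : Fin M),
      g ∈ S t ↔ g < e.symm t ∧ ∃ i j, r (φ t i) = r ((p g).1 j) := by
    intro t g
    rw [hS]
    simp [Finset.mem_filter]
  -- Claim 1: the greedy value at the charged step dominates w (φ t) t
  have claim1 : ∀ t, w (φ t) t ≤ w (p (c t)).1 (p (c t)).2 := by
    intro t
    by_cases hSt : (S t).Nonempty
    · have hct : c t = (S t).min' hSt := dif_pos hSt
      have hmem := (hSmem t _).mp ((S t).min'_mem hSt)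
      have hlt : (S t).min' hSt < e.symm t := hmem.1
      apply hgreedy (c t) (φ t) t (hφinj t)
      · intro i g hg i' hcontr
        rw [hct] at hg
        have hgmem : g ∈ S t := (hSmem t g).mpr ⟨hg.trans hlt, ⟨i, i', hcontr⟩⟩
        exact absurd ((S t).min'_le g hgmem) (not_le.mpr hg)
      · intro g hg heq
        rw [hct] at hg
        have : e.symm t = g := by
          rw [heq, hpe g]; exact e.symm_apply_apply g
        rw [this] at hlt
        exact absurd (hg.trans hlt) (lt_irrefl g)
    · have hct : c t = e.symm t := dif_neg hSt
      apply hgreedy (c t) (φ t) t (hφinj t)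
      · intro i g hg i' hcontr
        rw [hct] at hg
        exact hSt ⟨g, (hSmem t g).mpr ⟨hg, ⟨i, i', hcontr⟩⟩⟩
      · intro g hg heq
        rw [hct] at hg
        have : e.symm t = g := by
          rw [heq, hpe g]; exact e.symm_apply_apply g
        rw [this] at hg
        exact absurd hg (lt_irrefl g)
  -- Claim 2: each step is charged at most n+1 times
  have claim2 : ∀ g : Fin M,
      (Finset.univ.filter (fun t => c t = g)).card ≤ n + 1 := by
    intro g
    set f : T → Option (Fin n) := fun t =>
      if h : ∃ i j, r (φ t i) = r ((p g).1 j)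
      then some (Classical.choose (Classical.choose_spec h)) else none with hf
    have hinj : Set.InjOn f ((Finset.univ.filter (fun t => c t = g)) : Finset T) := by
      intro t ht t' ht' hftt
      simp only [Finset.coe_filter, Set.mem_setOf_eq] at ht ht'
      by_cases h1 : ∃ i j, r (φ t i) = r ((p g).1 j)
      · by_cases h2 : ∃ i j, r (φ t' i) = r ((p g).1 j)
        · rw [hf] at hftt
          simp only [dif_pos h1, dif_pos h2, Option.some.injEq] at hftt
          have e1 := Classical.choose_spec (Classical.choose_spec h1)
          have e2 := Classical.choose_spec (Classical.choose_spec h2)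
          have : r (φ t (Classical.choose h1)) = r (φ t' (Classical.choose h2)) :=
            e1.trans (by rw [hftt]; exact e2.symm)
          have := hφ (a₁ := (t, Classical.choose h1)) (a₂ := (t', Classical.choose h2)) this
          exact congrArg Prod.fst this
        · rw [hf] at hftt
          simp only [dif_pos h1, dif_neg h2] at hftt
          exact absurd hftt (Option.some_ne_none _)
      · by_cases h2 : ∃ i j, r (φ t' i) = r ((p g).1 j)
        · rw [hf] at hftt
          simp only [dif_neg h1, dif_pos h2] at hftt
          exact absurd hftt.symm (Option.some_ne_none _)
        · -- both have no conflict at g; then c t = g forces t = e g, likewise t'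
          have key : ∀ s : T, c s = g → ¬(∃ i j, r (φ s i) = r ((p g).1 j)) → s = e g := by
            intro s hcs hns
            by_cases hSs : (S s).Nonempty
            · exfalso
              have hcs0 : c s = (S s).min' hSs := dif_pos hSs
              have hmem := (hSmem s _).mp ((S s).min'_mem hSs)
              rw [← hcs0, hcs] at hmem
              exact hns hmem.2
            · have hcs0 : c s = e.symm s := dif_neg hSs
              have : e.symm s = g := hcs0 ▸ hcs
              rw [← this, e.apply_symm_apply]
          rw [key t ht.2 h1, key t' ht'.2 h2]
    have hcard := Finset.card_le_card_of_injOn f (fun x _ => Finset.mem_univ (f x)) hinj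
    simpa using hcard
  -- Summation
  have hsum : ∑ t, w (φ t) t ≤ ((n : ℝ) + 1) * ∑ h, w (p h).1 (p h).2 := by
    have h1 : ∑ t, w (φ t) t
        = ∑ g : Fin M, ∑ t ∈ Finset.univ.filter (fun t => c t = g), w (φ t) t :=
      (Finset.sum_fiberwise _ _ _).symm
    rw [h1, Finset.mul_sum]
    apply Finset.sum_le_sum
    intro g _
    calc ∑ t ∈ Finset.univ.filter (fun t => c t = g), w (φ t) t
        ≤ ∑ t ∈ Finset.univ.filter (fun t => c t = g), w (p g).1 (p g).2 := by
          apply Finset.sum_le_sum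
          intro t ht
          simp only [Finset.mem_filter, Finset.mem_univ, true_and] at ht
          have := claim1 t
          rwa [ht] at this
      _ = (Finset.univ.filter (fun t => c t = g)).card * w (p g).1 (p g).2 := by
          rw [Finset.sum_const, nsmul_eq_mul]
      _ ≤ ((n : ℝ) + 1) * w (p g).1 (p g).2 := by
          apply mul_le_mul_of_nonneg_right _ (hw _ _)
          have := claim2 g
          calc ((Finset.univ.filter (fun t => c t = g)).card : ℝ)
              ≤ ((n + 1 : ℕ) : ℝ) := by exact_mod_cast this
            _ = (n : ℝ) + 1 := by push_cast; ring
  rw [ge_iff_le, one_div, inv_mul_le_iff₀ (by positivity : (0 : ℝ) < (n : ℝ) + 1)]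
  exact hsum
end

section
/- Fix n ≥ 1. Let p : Fin M → (Fin n → A) × T be a greedy n-tuple sequence and let φ : T → (Fin n → A) be any feasible n-tuple assignment. Then there exists a map F : T → T such that (i) for every target t, w (φ t) t ≤ w ((p h).1) ((p h).2) where h is the unique index with (p h).2 = F t, and (ii) for every target y, the set {t | F t = y} has at most n + 1 elements. -/
/-!
Charge each target `t` to the earliest greedy step that blocks the pair `(φ t, t)`, i.e. that
either serves `t` itself or uses one of the robots of `φ t`. Before that step the pair was still
available, so greedy choice bounds `w (φ t) t` by the quality of that step. Conversely, a step
with target `y` blocks `y` itself and, since the robot sets of the tuples `φ t` are pairwise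
disjoint, at most one further target per robot of the step: at most `n + 1` targets in all.
-/

open Function

section Charging

variable {A R T : Type*} (r : A → R)

def SharesRobot {ι κ : Type*} (a : ι → A) (b : κ → A) : Prop :=
  ∃ i j, r (a i) = r (b j)

theorem ncard_setOf_sharesRobot_le {ι κ : Type*} [Finite κ] {φ : T → ι → A}
    (hφ : Injective fun x : T × ι => r (φ x.1 x.2)) (b : κ → A) :
    {t | SharesRobot r (φ t) b}.ncard ≤ Nat.card κ := by
  choose i j hij using fun t : {t | SharesRobot r (φ t) b} => t.2
  refine Nat.card_le_card_of_injective j fun t t' htt' => Subtype.ext ?_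
  have hrob : r (φ t (i t)) = r (φ t' (i t')) := by rw [hij, hij, htt']
  exact congrArg Prod.fst (@hφ (t, i t) (t', i t') hrob)

variable {n M : ℕ} (p : Fin M → (Fin n → A) × T) (φ : T → Fin n → A)

def Blocks (t : T) (h : Fin M) : Prop :=
  (p h).2 = t ∨ SharesRobot r (φ t) (p h).1

variable {r p φ}

theorem exists_first_blocks (htar : Surjective fun h => (p h).2) (t : T) :
    ∃ h, Blocks r p φ t h ∧ ∀ g < h, ¬ Blocks r p φ t g := by
  obtain ⟨h, hh⟩ := htar t
  obtain ⟨g, hg, hmin⟩ := wellFounded_lt.has_min {g | Blocks r p φ t g} ⟨h, Or.inl hh⟩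
  exact ⟨g, hg, fun g' hg' hblock => hmin g' hblock hg'⟩

theorem le_of_forall_lt_not_blocks {w : (Fin n → A) → T → ℝ} {t : T} {h : Fin M}
    (hgreedy : ∀ a : Fin n → A, ∀ t : T,
      Injective (fun i => r (a i)) →
      (∀ i : Fin n, ∀ g, g < h → ∀ i' : Fin n, r (a i) ≠ r ((p g).1 i')) →
      (∀ g, g < h → t ≠ (p g).2) →
      w a t ≤ w (p h).1 (p h).2)
    (hφ : Injective fun x : T × Fin n => r (φ x.1 x.2))
    (hfree : ∀ g < h, ¬ Blocks r p φ t g) :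
    w (φ t) t ≤ w (p h).1 (p h).2 :=
  hgreedy (φ t) t (fun i i' hii' => congrArg Prod.snd (@hφ (t, i) (t, i') hii'))
    (fun i g hg i' hrob => hfree g hg (Or.inr ⟨i, i', hrob⟩))
    (fun g hg htg => hfree g hg (Or.inl htg.symm))

theorem ncard_setOf_blocks_le (hφ : Injective fun x : T × Fin n => r (φ x.1 x.2))
    (h : Fin M) : {t | Blocks r p φ t h}.ncard ≤ n + 1 := by
  have hset : {t | Blocks r p φ t h} = insert (p h).2 {t | SharesRobot r (φ t) (p h).1} := by
    ext t
    simp only [Blocks, Set.mem_ofPred_eq, Set.mem_insert_iff, eq_comm]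
  calc {t | Blocks r p φ t h}.ncard
      ≤ {t | SharesRobot r (φ t) (p h).1}.ncard + 1 := hset ▸ Set.ncard_insert_le _ _
    _ ≤ n + 1 := by
      simpa using Nat.add_le_add_right (ncard_setOf_sharesRobot_le r hφ (p h).1) 1

end Charging

theorem greedy_tuple_charging_map_exists_general
    {A R T : Type*} [Fintype T]
    (n : ℕ)
    (M : ℕ)
    (r : A → R) (w : (Fin n → A) → T → ℝ)
    (p : Fin M → (Fin n → A) × T)
    (htar : Function.Bijective (fun h => (p h).2))
    (hgreedy : ∀ h : Fin M, ∀ a : Fin n → A, ∀ t : T,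
      Function.Injective (fun i => r (a i)) →
      (∀ i : Fin n, ∀ g, g < h → ∀ i' : Fin n, r (a i) ≠ r ((p g).1 i')) →
      (∀ g, g < h → t ≠ (p g).2) →
      w a t ≤ w (p h).1 (p h).2)
    (φ : T → Fin n → A)
    (hφ : Function.Injective (fun x : T × Fin n => r (φ x.1 x.2))) :
    ∃ F : T → T,
      (∀ t : T, ∀ h : Fin M, (p h).2 = F t → w (φ t) t ≤ w (p h).1 (p h).2) ∧
      (∀ y : T, ({t | F t = y} : Set T).ncard ≤ n + 1) := by
  choose step hblocks hfirst using exists_first_blocks (r := r) (φ := φ) htar.2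
  refine ⟨fun t => (p (step t)).2, fun t h hh => ?_, fun y => ?_⟩
  · obtain rfl : h = step t := htar.1 hh
    exact le_of_forall_lt_not_blocks (hgreedy _) hφ (hfirst t)
  · obtain ⟨h, rfl⟩ := htar.2 y
    have hfiber : {t | (p (step t)).2 = (p h).2} ⊆ {t | Blocks r p φ t h} :=
      fun t ht => htar.1 ht ▸ hblocks t
    exact (Set.ncard_le_ncard hfiber (Set.toFinite _)).trans (ncard_setOf_blocks_le hφ h)

/-- Charging-map existence in the proof of Remark 1: given a greedy `n`-tuple
sequence `p` and a feasible `n`-tuple assignment `φ`, there is a map `F : T → T`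
such that the quality of the optimal `(n+1)`-tuple for `t` is at most the greedy
quality of the step whose target is `F t`, and every fiber of `F` has at most
`n + 1` elements. -/
theorem greedy_tuple_charging_map_exists
    {A R T : Type*} [Fintype A] [Fintype R] [Fintype T]
    (n : ℕ) (hn : 1 ≤ n)
    (M : ℕ) (hM : Fintype.card T = M)
    (r : A → R) (w : (Fin n → A) → T → ℝ)
    (hw : ∀ a t, 0 ≤ w a t)
    (hsym : ∀ (σ : Equiv.Perm (Fin n)) (a : Fin n → A) (t : T),
      w (a ∘ σ) t = w a t)
    (p : Fin M → (Fin n → A) × T)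
    (htar : Function.Bijective (fun h => (p h).2))
    (hrob : Function.Injective (fun x : Fin M × Fin n => r ((p x.1).1 x.2)))
    (hgreedy : ∀ h : Fin M, ∀ a : Fin n → A, ∀ t : T,
      Function.Injective (fun i => r (a i)) →
      (∀ i : Fin n, ∀ g, g < h → ∀ i' : Fin n, r (a i) ≠ r ((p g).1 i')) →
      (∀ g, g < h → t ≠ (p g).2) →
      w a t ≤ w (p h).1 (p h).2)
    (φ : T → Fin n → A)
    (hφ : Function.Injective (fun x : T × Fin n => r (φ x.1 x.2))) :
    ∃ F : T → T,
      (∀ t : T, ∀ h : Fin M, (p h).2 = F t → w (φ t) t ≤ w (p h).1 (p h).2) ∧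
      (∀ y : T, ({t | F t = y} : Set T).ncard ≤ n + 1) :=
  greedy_tuple_charging_map_exists_general n M r w p htar hgreedy φ hφ
end
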